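/- arXiv:1509.08947 — 3 statements merged into one kernel-verified Lean document; each statement's English description precedes it below -/
import Mathlib

section
/- With F and B as above, define C_n = {x ∈ B : π_m(x) = π_n(x) for all m > n}. Then B = ⋃_{n∈ℕ} C_n. -/
def pi (pair : ℕ × ℕ → ℕ) (n : ℕ) (x : ℕ → Bool) : ℕ → Bool :=
  fun m => x (pair (n, m))

def Bset (pair : ℕ × ℕ → ℕ) (F : ℕ → Set (ℕ → Bool)) : Set (ℕ → Bool) :=
  {x | ∀ n, pi pair n x ∈ F (n + 1) \ F n ∨
    (pi pair n x ∈ F n ∧ pi pair n x = pi pair (n + 1) x)}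

def Cset (pair : ℕ × ℕ → ℕ) (F : ℕ → Set (ℕ → Bool)) (n : ℕ) : Set (ℕ → Bool) :=
  {x ∈ Bset pair F | ∀ m > n, pi pair m x = pi pair n x}

/-!
Let `x ∈ B`. Since `x` lies in some `F N` and `F N` is closed under the projections,
`π_N(x) ∈ F N`. Once some coordinate `π_m(x)` lies in `F m`, the first alternative in the
definition of `B` is excluded at `m`, so `π_{m+1}(x) = π_m(x)`, which lies in `F (m+1)` by
monotonicity. By induction all later coordinates agree with `π_N(x)`, i.e. `x ∈ C_N`.
-/

section

variable {pair : ℕ × ℕ → ℕ} {F : ℕ → Set (ℕ → Bool)} {x : ℕ → Bool}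

theorem Cset_subset_Bset (n : ℕ) : Cset pair F n ⊆ Bset pair F :=
  fun _ hx => hx.1

theorem pi_succ_eq_of_mem_Bset (hB : x ∈ Bset pair F) {m : ℕ} (hm : pi pair m x ∈ F m) :
    pi pair (m + 1) x = pi pair m x := by
  rcases hB m with hnew | ⟨-, hstay⟩
  · exact absurd hm hnew.2
  · exact hstay.symm

theorem pi_eq_of_mem_Bset (hmono : Monotone F) (hB : x ∈ Bset pair F) {N : ℕ}
    (hN : pi pair N x ∈ F N) {m : ℕ} (hm : N ≤ m) :
    pi pair m x = pi pair N x ∧ pi pair m x ∈ F m := by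
  induction m, hm using Nat.le_induction with
  | base => exact ⟨rfl, hN⟩
  | succ m _ ih =>
    have hstep := pi_succ_eq_of_mem_Bset hB ih.2
    exact ⟨hstep.trans ih.1, hstep ▸ hmono m.le_succ ih.2⟩

theorem mem_Cset_of_mem_Bset (hmono : Monotone F) (hB : x ∈ Bset pair F) {N : ℕ}
    (hN : pi pair N x ∈ F N) : x ∈ Cset pair F N :=
  ⟨hB, fun _ hm => (pi_eq_of_mem_Bset hmono hB hN hm.le).1⟩

end

theorem stmt4_general (pair : ℕ × ℕ → ℕ)
    (F : ℕ → Set (ℕ → Bool)) (hmono : Monotone F)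
    (hunion : ⋃ n, F n = Set.univ)
    (hclosed : ∀ n m x, x ∈ F n → pi pair m x ∈ F n) :
    Bset pair F = ⋃ n, Cset pair F n := by
  refine Set.Subset.antisymm (fun x hB => ?_) (Set.iUnion_subset Cset_subset_Bset)
  obtain ⟨N, hN⟩ := Set.mem_iUnion.mp (hunion.symm ▸ Set.mem_univ x)
  exact Set.mem_iUnion.mpr ⟨N, mem_Cset_of_mem_Bset hmono hB (hclosed N N x hN)⟩

theorem stmt4 (pair : ℕ × ℕ → ℕ) (hpair : Function.Bijective pair)
    (F : ℕ → Set (ℕ → Bool)) (hmono : Monotone F)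
    (hunion : ⋃ n, F n = Set.univ)
    (hclosed : ∀ n m x, x ∈ F n → pi pair m x ∈ F n) :
    Bset pair F = ⋃ n, Cset pair F n :=
  stmt4_general pair F hmono hunion hclosed
end

section
/- With F increasing, closed under every π_m, and with union 2^ℕ, and B defined as above: if x ∈ B and x ∈ F_n, then π_m(x) = π_n(x) for all m ≥ n (i.e., x ∈ C_n). -/
theorem pi_mem_of_le {pair : ℕ × ℕ → ℕ} {F : ℕ → Set (ℕ → Bool)} (hmono : Monotone F)
    (hclosed : ∀ n m x, x ∈ F n → pi pair m x ∈ F n) {x : ℕ → Bool} {n k : ℕ}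
    (hxF : x ∈ F n) (hnk : n ≤ k) : pi pair k x ∈ F k :=
  hmono hnk (hclosed n k x hxF)

theorem pi_succ_eq_of_mem_Bset_s11 {pair : ℕ × ℕ → ℕ} {F : ℕ → Set (ℕ → Bool)} {x : ℕ → Bool}
    (hxB : x ∈ Bset pair F) {k : ℕ} (hk : pi pair k x ∈ F k) :
    pi pair (k + 1) x = pi pair k x :=
  (((hxB k).resolve_left fun h => h.2 hk).2).symm

theorem stmt11_general (pair : ℕ × ℕ → ℕ)
    (F : ℕ → Set (ℕ → Bool)) (hmono : Monotone F)
    (hclosed : ∀ n m x, x ∈ F n → pi pair m x ∈ F n)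
    (x : ℕ → Bool) (n : ℕ) (hxB : x ∈ Bset pair F) (hxF : x ∈ F n) :
    ∀ m ≥ n, pi pair m x = pi pair n x := by
  intro m hm
  induction m, hm using Nat.le_induction with
  | base => rfl
  | succ k hk ih =>
    rw [← ih]
    exact pi_succ_eq_of_mem_Bset_s11 hxB (pi_mem_of_le hmono hclosed hxF hk)

theorem stmt11 (pair : ℕ × ℕ → ℕ) (hpair : Function.Bijective pair)
    (F : ℕ → Set (ℕ → Bool)) (hmono : Monotone F)
    (hunion : ⋃ n, F n = Set.univ)
    (hclosed : ∀ n m x, x ∈ F n → pi pair m x ∈ F n)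
    (x : ℕ → Bool) (n : ℕ) (hxB : x ∈ Bset pair F) (hxF : x ∈ F n) :
    ∀ m ≥ n, pi pair m x = pi pair n x :=
  stmt11_general pair F hmono hclosed x n hxB hxF
end

section
/- Let F : ℕ → Set(2^ℕ) be increasing with each F_{k+1} \ F_k nonempty, and define B as above. For y ∈ 2^ℕ with y ∈ F_{n+1} \ F_n, choose x_k ∈ F_{k+1} \ F_k for each k < n, and let x be the unique element of 2^ℕ with π_k(x) = x_k for k < n and π_k(x) = y for k ≥ n. Then x ∈ B. -/
theorem stmt12_general (pair : ℕ × ℕ → ℕ)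
    (F : ℕ → Set (ℕ → Bool)) (hmono : Monotone F)
    (n : ℕ) (y : ℕ → Bool) (hy : y ∈ F (n + 1) \ F n)
    (xk : ℕ → (ℕ → Bool)) (hxk : ∀ k < n, xk k ∈ F (k + 1) \ F k)
    (x : ℕ → Bool)
    (hlt : ∀ k < n, pi pair k x = xk k)
    (hge : ∀ k ≥ n, pi pair k x = y) :
    x ∈ Bset pair F := by
  intro k
  rcases lt_trichotomy k n with hk | rfl | hk
  · exact Or.inl (hlt k hk ▸ hxk k hk)
  · exact Or.inl (hge k le_rfl ▸ hy)
  · -- past n both coordinates equal y, which already lies in F (n + 1) ⊆ F k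
    rw [hge k hk.le, hge (k + 1) (by omega)]
    exact Or.inr ⟨hmono hk hy.1, rfl⟩

theorem stmt12 (pair : ℕ × ℕ → ℕ) (hpair : Function.Bijective pair)
    (F : ℕ → Set (ℕ → Bool)) (hmono : Monotone F)
    (hne : ∀ k, (F (k + 1) \ F k).Nonempty)
    (n : ℕ) (y : ℕ → Bool) (hy : y ∈ F (n + 1) \ F n)
    (xk : ℕ → (ℕ → Bool)) (hxk : ∀ k < n, xk k ∈ F (k + 1) \ F k)
    (x : ℕ → Bool)
    (hlt : ∀ k < n, pi pair k x = xk k)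
    (hge : ∀ k ≥ n, pi pair k x = y) :
    x ∈ Bset pair F :=
  stmt12_general pair F hmono n y hy xk hxk x hlt hge
end
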